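/- Let m ≥ 1 and x : Fin m → ℝ, and for ω > 0 define the mellowmax value mm_ω(x) = log( (1/m)·∑_i exp(ω·x_i) ) / ω. Then mm_ω(x) tends to max_i x_i as ω → ∞, and mm_ω(x) tends to the mean (1/m)·∑_i x_i as ω → 0 from the right. -/

import Mathlib

/-- The maximum coordinate of `x : Fin m → ℝ`, for `m ≥ 1`. -/
noncomputable def maxVal {m : ℕ} (hm : 1 ≤ m) (x : Fin m → ℝ) : ℝ :=
  Finset.univ.sup' ⟨⟨0, hm⟩, Finset.mem_univ _⟩ x

/-- The mellowmax value `mm_ω(x) = log((1/m)·∑ i, exp(ω·x_i)) / ω`. -/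
noncomputable def mellowmax {m : ℕ} (x : Fin m → ℝ) (ω : ℝ) : ℝ :=
  Real.log ((1 / (m : ℝ)) * ∑ i, Real.exp (ω * x i)) / ω

/-!
For `ω > 0` the mean `(1/m) ∑ exp(ω x_i)` lies between `exp(ω M) / m` and `exp(ω M)`, where `M` is
the maximum, so `M - log m / ω ≤ mm_ω(x) ≤ M`. Near `0`, `mm_ω(x)` is the difference quotient at `0`
of `ω ↦ log((1/m) ∑ exp(ω x_i))`, which vanishes at `0` and has derivative the mean of `x` there.
-/

open Filter Topology Real

section
variable {m : ℕ}

lemma le_maxVal (hm : 1 ≤ m) (x : Fin m → ℝ) (i : Fin m) : x i ≤ maxVal hm x :=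
  Finset.le_sup' x (Finset.mem_univ i)

lemma exists_eq_maxVal (hm : 1 ≤ m) (x : Fin m → ℝ) : ∃ i, x i = maxVal hm x := by
  obtain ⟨i, -, hi⟩ := Finset.exists_mem_eq_sup' ⟨⟨0, hm⟩, Finset.mem_univ _⟩ x
  exact ⟨i, hi.symm⟩

lemma mean_exp_pos (hm : 1 ≤ m) (x : Fin m → ℝ) (ω : ℝ) :
    0 < (1 / (m : ℝ)) * ∑ i, exp (ω * x i) := by
  have : Nonempty (Fin m) := ⟨⟨0, hm⟩⟩
  have : (0 : ℝ) < m := by exact_mod_cast hm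
  positivity

lemma mean_exp_zero (hm : m ≠ 0) (x : Fin m → ℝ) :
    (1 / (m : ℝ)) * ∑ i, exp (0 * x i) = 1 := by
  simp [hm]

lemma mellowmax_le_maxVal (hm : 1 ≤ m) (x : Fin m → ℝ) {ω : ℝ} (hω : 0 < ω) :
    mellowmax x ω ≤ maxVal hm x := by
  have hsum : ∑ i, exp (ω * x i) ≤ m * exp (ω * maxVal hm x) := by
    simpa using Finset.sum_le_card_nsmul Finset.univ _ _ fun i _ =>
      exp_le_exp.2 (mul_le_mul_of_nonneg_left (le_maxVal hm x i) hω.le)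
  have hmean : (1 / (m : ℝ)) * ∑ i, exp (ω * x i) ≤ exp (ω * maxVal hm x) := by
    have : (0 : ℝ) < m := by exact_mod_cast hm
    rw [one_div_mul_eq_div, div_le_iff₀ this, mul_comm]
    exact hsum
  rw [mellowmax, div_le_iff₀ hω, mul_comm _ ω]
  exact (log_le_iff_le_exp (mean_exp_pos hm x ω)).2 hmean

lemma maxVal_sub_log_div_le_mellowmax (hm : 1 ≤ m) (x : Fin m → ℝ) {ω : ℝ} (hω : 0 < ω) :
    maxVal hm x - log m / ω ≤ mellowmax x ω := by
  obtain ⟨i, hi⟩ := exists_eq_maxVal hm x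
  rw [mellowmax, le_div_iff₀ hω, sub_mul, div_mul_cancel₀ _ hω.ne']
  calc maxVal hm x * ω - log m = log ((1 / (m : ℝ)) * exp (ω * x i)) := by
        rw [log_mul (by positivity) (exp_ne_zero _), log_exp, one_div, log_inv, hi]; ring
    _ ≤ log ((1 / (m : ℝ)) * ∑ j, exp (ω * x j)) := by
        gcongr
        exact Finset.single_le_sum (fun j _ => (exp_pos (ω * x j)).le) (Finset.mem_univ i)

lemma tendsto_mellowmax_atTop (hm : 1 ≤ m) (x : Fin m → ℝ) :
    Tendsto (mellowmax x) atTop (𝓝 (maxVal hm x)) := by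
  have hlower : Tendsto (fun ω => maxVal hm x - log m / ω) atTop (𝓝 (maxVal hm x)) := by
    simpa using tendsto_const_nhds.sub (tendsto_const_nhds.div_atTop (tendsto_id (α := ℝ)))
  refine tendsto_of_tendsto_of_tendsto_of_le_of_le' hlower tendsto_const_nhds ?_ ?_
  · filter_upwards [eventually_gt_atTop 0] with ω hω
    exact maxVal_sub_log_div_le_mellowmax hm x hω
  · filter_upwards [eventually_gt_atTop 0] with ω hω
    exact mellowmax_le_maxVal hm x hω

lemma mellowmax_eq_slope (x : Fin m → ℝ) :
    mellowmax x = slope (fun ω => log ((1 / (m : ℝ)) * ∑ i, exp (ω * x i))) 0 := by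
  funext ω
  rcases eq_or_ne m 0 with rfl | hm
  · simp [mellowmax, slope]
  · simp only [slope, mean_exp_zero hm, log_one, vsub_eq_sub, sub_zero,
      smul_eq_mul, mellowmax]
    ring

lemma hasDerivAt_log_mean_exp (hm : m ≠ 0) (x : Fin m → ℝ) :
    HasDerivAt (fun ω => log ((1 / (m : ℝ)) * ∑ i, exp (ω * x i)))
      ((1 / (m : ℝ)) * ∑ i, x i) 0 := by
  have hmean : HasDerivAt (fun ω => (1 / (m : ℝ)) * ∑ i, exp (ω * x i))
      ((1 / (m : ℝ)) * ∑ i, x i) 0 := by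
    refine HasDerivAt.const_mul _ (HasDerivAt.fun_sum fun i _ => ?_)
    simpa using ((hasDerivAt_id (0 : ℝ)).mul_const (x i)).exp
  have h := hmean.log (by rw [mean_exp_zero hm x]; exact one_ne_zero)
  rwa [mean_exp_zero hm, div_one] at h

lemma tendsto_mellowmax_nhdsGT_zero (hm : m ≠ 0) (x : Fin m → ℝ) :
    Tendsto (mellowmax x) (𝓝[>] 0) (𝓝 ((1 / (m : ℝ)) * ∑ i, x i)) := by
  rw [mellowmax_eq_slope]
  exact (hasDerivAt_iff_tendsto_slope.1 (hasDerivAt_log_mean_exp hm x)).mono_left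
    (nhdsGT_le_nhdsNE 0)

end

/-- The mellowmax value converges to the max as `ω → ∞`, and to the mean
`(1/m)·∑ i, x_i` as `ω → 0⁺`. -/
theorem mellowmax_tendsto_max_and_mean
    {m : ℕ} (hm : 1 ≤ m) (x : Fin m → ℝ) :
    Filter.Tendsto (fun ω => mellowmax x ω) Filter.atTop (nhds (maxVal hm x)) ∧
    Filter.Tendsto (fun ω => mellowmax x ω) (nhdsWithin 0 (Set.Ioi 0))
      (nhds ((1 / (m : ℝ)) * ∑ i, x i)) :=
  ⟨tendsto_mellowmax_atTop hm x, tendsto_mellowmax_nhdsGT_zero (Nat.one_le_iff_ne_zero.1 hm) x⟩
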